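/- Let μ₀ be a Borel probability measure on ℝ with mean 0 and variance 1 whose distribution function F₀ is continuous and strictly increasing, let α∈(0,1), let 0<ε<1, and let 𝓛_ε be the set of probability measures of the form (1−θ)μ₀ + θν with θ∈[0,ε] and ν any Borel probability measure on ℝ with mean 0 and variance 1. If α ≤ (1−ε)F₀(0), then inf_{μ∈𝓛_ε} VaR_α(μ) = VaR_{α/(1−ε)}(μ₀), and sup_{μ∈𝓛_ε} VaR_α(μ) is the unique r>−F₀⁻¹(α) solving (1−ε)F₀(−r) + ε/(1+r²) = α. -/

import Mathlib

open MeasureTheory Set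

/-- The distribution function of a measure: `F_μ(x) = μ((-∞, x])`. -/
noncomputable def distFun (μ : Measure ℝ) (x : ℝ) : ℝ := (μ (Iic x)).toReal

/-- The lower quantile of order `α`: `q_α(μ) = inf {x : F_μ(x) ≥ α}`. -/
noncomputable def lowerQuantile (μ : Measure ℝ) (α : ℝ) : ℝ :=
  sInf {x : ℝ | α ≤ distFun μ x}

/-- The Value-at-Risk of order `α`: `VaR_α(μ) = -q_α(μ)`. -/
noncomputable def VaR (μ : Measure ℝ) (α : ℝ) : ℝ := - lowerQuantile μ α

/-
Cantelli's inequality gives `F_ν(x) ≤ 1/(1 + x²)` for `x < 0` and every law `ν` with mean 0 and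
variance 1, with equality for the two-point law on `{x, -1/x}`. Hence on `(-∞, 0)` every
distribution function of `𝓛_ε` lies between `(1 - ε)F₀` and `U(x) = (1 - ε)F₀(x) + ε/(1 + x²)`,
and mixing in two-point laws with weight `ε` meets `U` at any given point, or agrees with
`(1 - ε)F₀` below any given point. So the `α`-quantiles over `𝓛_ε` range from the root of
`U = α` up to `F₀⁻¹(α/(1 - ε))`. The root lies strictly left of `F₀⁻¹(α)` because Cantelli's
bound is strict for `μ₀`, whose distribution function is positive everywhere.
-/

open Filter Topology ProbabilityTheory

lemma distFun_nonneg (μ : Measure ℝ) (x : ℝ) : 0 ≤ distFun μ x := ENNReal.toReal_nonneg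

lemma distFun_eq_cdf (μ : Measure ℝ) [IsProbabilityMeasure μ] : distFun μ = cdf μ :=
  funext fun x => (cdf_eq_real μ x).symm

lemma exists_le_eq_of_tendsto_atBot {f : ℝ → ℝ} (hf : Continuous f) {c t y : ℝ}
    (hlim : Tendsto f atBot (𝓝 c)) (hct : c < t) (hty : t ≤ f y) : ∃ x ≤ y, f x = t := by
  obtain ⟨z, hz⟩ := eventually_atBot.1 (hlim.eventually (gt_mem_nhds hct))
  obtain ⟨x, hx, hfx⟩ := intermediate_value_Icc (min_le_right z y) hf.continuousOn
    ⟨(hz _ (min_le_left z y)).le, hty⟩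
  exact ⟨x, hx.2, hfx⟩

section lowerQuantile

variable {μ : Measure ℝ} {α x : ℝ}

lemma mem_lowerBounds_of_distFun_lt (h : ∀ z < x, distFun μ z < α) :
    x ∈ lowerBounds {y | α ≤ distFun μ y} :=
  fun _ hy => not_lt.1 fun hyx => (h _ hyx).not_ge hy

lemma lowerQuantile_eq (hx : α ≤ distFun μ x) (h : ∀ z < x, distFun μ z < α) :
    lowerQuantile μ α = x :=
  IsLeast.csInf_eq ⟨hx, mem_lowerBounds_of_distFun_lt h⟩

lemma lowerQuantile_eq_of_strictMono (hmono : StrictMono (distFun μ)) (hx : distFun μ x = α) :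
    lowerQuantile μ α = x :=
  lowerQuantile_eq hx.ge fun _ hz => hx ▸ hmono hz

variable [IsProbabilityMeasure μ]

lemma lowerQuantile_le (hα : 0 < α) (hx : α ≤ distFun μ x) : lowerQuantile μ α ≤ x := by
  obtain ⟨z, hz⟩ := eventually_atBot.1 <|
    (distFun_eq_cdf μ ▸ tendsto_cdf_atBot μ).eventually (gt_mem_nhds hα)
  exact csInf_le ⟨z, mem_lowerBounds_of_distFun_lt fun y hy => hz y hy.le⟩ hx

lemma le_lowerQuantile (hα : α < 1) (h : ∀ z < x, distFun μ z < α) : x ≤ lowerQuantile μ α := by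
  obtain ⟨y, hy⟩ := ((distFun_eq_cdf μ ▸ tendsto_cdf_atTop μ).eventually
    (lt_mem_nhds hα)).exists
  exact le_csInf ⟨y, hy.le⟩ (mem_lowerBounds_of_distFun_lt h)

end lowerQuantile

section Cantelli

variable {ν : Measure ℝ}

lemma integrable_sq_of_integral_sq_eq_one (h2 : ∫ x, x ^ 2 ∂ν = 1) :
    Integrable (fun x : ℝ => x ^ 2) ν := by
  by_contra h
  simp [integral_undef h] at h2

variable [IsProbabilityMeasure ν]

lemma integrable_id_of_integral_sq_eq_one (h2 : ∫ x, x ^ 2 ∂ν = 1) :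
    Integrable (fun x : ℝ => x) ν :=
  ((memLp_two_iff_integrable_sq aestronglyMeasurable_id).2
    (integrable_sq_of_integral_sq_eq_one h2)).integrable one_le_two

lemma integrable_sub_sq (h2 : ∫ x, x ^ 2 ∂ν = 1) (u : ℝ) :
    Integrable (fun y : ℝ => (u - y) ^ 2) ν := by
  simp_rw [sub_sq]
  exact ((integrable_const _).sub ((integrable_id_of_integral_sq_eq_one h2).const_mul _)).add
    (integrable_sq_of_integral_sq_eq_one h2)

lemma integral_sub_sq (h1 : ∫ x, x ∂ν = 0) (h2 : ∫ x, x ^ 2 ∂ν = 1) (u : ℝ) :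
    ∫ y, (u - y) ^ 2 ∂ν = u ^ 2 + 1 := by
  have hid := (integrable_id_of_integral_sq_eq_one h2).const_mul (2 * u)
  simp_rw [sub_sq]
  rw [integral_add (f := fun y => u ^ 2 - 2 * u * y) ((integrable_const _).sub hid)
    (integrable_sq_of_integral_sq_eq_one h2), integral_sub (integrable_const _) hid,
    integral_const_mul, h1, h2]
  simp

/-- `(u - y)²` dominates the step function equal to `(u - x')²` on `(-∞, x']` and to `(u - x)²`
on `(x', x]`. -/
lemma sq_mul_distFun_add_le (h1 : ∫ x, x ∂ν = 0) (h2 : ∫ x, x ^ 2 ∂ν = 1) {x' x u : ℝ}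
    (hx' : x' ≤ x) (hxu : x < u) :
    (u - x) ^ 2 * distFun ν x + ((u - x') ^ 2 - (u - x) ^ 2) * distFun ν x' ≤ u ^ 2 + 1 := by
  have hstep : ∀ y, (Iic x).indicator (fun _ => (u - x) ^ 2) y
      + (Iic x').indicator (fun _ => (u - x') ^ 2 - (u - x) ^ 2) y ≤ (u - y) ^ 2 := by
    intro y
    by_cases hyx : y ≤ x <;> by_cases hyx' : y ≤ x' <;>
      simp only [indicator, mem_Iic, hyx, hyx', if_true, if_false] <;> nlinarith
  have hint : ∀ z c : ℝ, Integrable ((Iic z).indicator fun _ => c) ν := fun z c =>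
    (integrable_const (μ := ν) c).indicator measurableSet_Iic
  calc (u - x) ^ 2 * distFun ν x + ((u - x') ^ 2 - (u - x) ^ 2) * distFun ν x'
      = ∫ y, ((Iic x).indicator (fun _ => (u - x) ^ 2) y
          + (Iic x').indicator (fun _ => (u - x') ^ 2 - (u - x) ^ 2) y) ∂ν := by
        rw [integral_add (hint _ _) (hint _ _), integral_indicator_const _ measurableSet_Iic,
          integral_indicator_const _ measurableSet_Iic]
        simp only [distFun, measureReal_def, smul_eq_mul]
        ring
    _ ≤ ∫ y, (u - y) ^ 2 ∂ν :=
        integral_mono ((hint _ _).add (hint _ _)) (integrable_sub_sq h2 u) hstep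
    _ = u ^ 2 + 1 := integral_sub_sq h1 h2 u

/-- Cantelli's inequality (`u = -1/x`, `x' = x - 1` above), with a slack term that makes it
strict when `F(x - 1) > 0`. -/
lemma exists_pos_one_add_sq_mul_distFun_add_le (h1 : ∫ x, x ∂ν = 0) (h2 : ∫ x, x ^ 2 ∂ν = 1)
    {x : ℝ} (hx : x < 0) :
    ∃ c > 0, (1 + x ^ 2) * distFun ν x + c * distFun ν (x - 1) ≤ 1 := by
  have hinv : x⁻¹ < 0 := inv_lt_zero.2 hx
  have hx2 : 0 < x ^ 2 := by nlinarith
  have h := sq_mul_distFun_add_le h1 h2 (sub_le_self x zero_le_one) (by linarith : x < -x⁻¹)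
  refine ⟨x ^ 2 * (2 * (-x⁻¹ - x) + 1) / (1 + x ^ 2), by
    have : 0 < 2 * (-x⁻¹ - x) + 1 := by linarith
    exact div_pos (mul_pos hx2 this) (by positivity), ?_⟩
  have hx0 : x ≠ 0 := hx.ne
  have hrhs : x ^ 2 / (1 + x ^ 2) * ((-x⁻¹) ^ 2 + 1) = 1 := by field_simp
  have hlhs : x ^ 2 / (1 + x ^ 2) * ((-x⁻¹ - x) ^ 2 * distFun ν x
      + ((-x⁻¹ - (x - 1)) ^ 2 - (-x⁻¹ - x) ^ 2) * distFun ν (x - 1))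
      = (1 + x ^ 2) * distFun ν x
        + x ^ 2 * (2 * (-x⁻¹ - x) + 1) / (1 + x ^ 2) * distFun ν (x - 1) := by
    field_simp
    ring
  have := mul_le_mul_of_nonneg_left h (by positivity : 0 ≤ x ^ 2 / (1 + x ^ 2))
  linarith

lemma distFun_le_inv_one_add_sq (h1 : ∫ x, x ∂ν = 0) (h2 : ∫ x, x ^ 2 ∂ν = 1) {x : ℝ}
    (hx : x < 0) : distFun ν x ≤ (1 + x ^ 2)⁻¹ := by
  obtain ⟨c, hc, h⟩ := exists_pos_one_add_sq_mul_distFun_add_le h1 h2 hx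
  rw [← one_div, le_div_iff₀' (by positivity)]
  nlinarith [distFun_nonneg ν (x - 1)]

lemma distFun_lt_inv_one_add_sq (h1 : ∫ x, x ∂ν = 0) (h2 : ∫ x, x ^ 2 ∂ν = 1) {x : ℝ}
    (hx : x < 0) (hpos : 0 < distFun ν (x - 1)) : distFun ν x < (1 + x ^ 2)⁻¹ := by
  obtain ⟨c, hc, h⟩ := exists_pos_one_add_sq_mul_distFun_add_le h1 h2 hx
  rw [← one_div, lt_div_iff₀' (by positivity)]
  nlinarith

end Cantelli

noncomputable def mix {Ω : Type*} [MeasurableSpace Ω] (μ ν : Measure Ω) (θ : ℝ) : Measure Ω :=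
  ENNReal.ofReal (1 - θ) • μ + ENNReal.ofReal θ • ν

section mix

variable {Ω : Type*} [MeasurableSpace Ω] {μ ν : Measure Ω} {θ : ℝ}

lemma isProbabilityMeasure_mix [IsProbabilityMeasure μ] [IsProbabilityMeasure ν]
    (hθ0 : 0 ≤ θ) (hθ1 : θ ≤ 1) : IsProbabilityMeasure (mix μ ν θ) := by
  constructor
  simp only [mix, Measure.add_apply, Measure.smul_apply, measure_univ, smul_eq_mul, mul_one]
  rw [← ENNReal.ofReal_add (by linarith) hθ0]
  simp

lemma integral_mix [IsFiniteMeasure μ] [IsFiniteMeasure ν] (hθ0 : 0 ≤ θ) (hθ1 : θ ≤ 1)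
    {f : Ω → ℝ} (hμ : Integrable f μ) (hν : Integrable f ν) :
    ∫ x, f x ∂mix μ ν θ = (1 - θ) * ∫ x, f x ∂μ + θ * ∫ x, f x ∂ν := by
  rw [mix, integral_add_measure (hμ.smul_measure ENNReal.ofReal_ne_top)
    (hν.smul_measure ENNReal.ofReal_ne_top), integral_smul_measure, integral_smul_measure,
    ENNReal.toReal_ofReal (by linarith), ENNReal.toReal_ofReal hθ0, smul_eq_mul, smul_eq_mul]

end mix

lemma distFun_mix {μ ν : Measure ℝ} [IsFiniteMeasure μ] [IsFiniteMeasure ν] {θ : ℝ}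
    (hθ0 : 0 ≤ θ) (hθ1 : θ ≤ 1) (x : ℝ) :
    distFun (mix μ ν θ) x = (1 - θ) * distFun μ x + θ * distFun ν x := by
  simp only [distFun, mix, Measure.add_apply, Measure.smul_apply, smul_eq_mul]
  rw [ENNReal.toReal_add (ENNReal.mul_ne_top ENNReal.ofReal_ne_top (measure_ne_top _ _))
    (ENNReal.mul_ne_top ENNReal.ofReal_ne_top (measure_ne_top _ _)),
    ENNReal.toReal_mul, ENNReal.toReal_mul, ENNReal.toReal_ofReal (by linarith),
    ENNReal.toReal_ofReal hθ0]

lemma distFun_dirac (a x : ℝ) : distFun (Measure.dirac a) x = if a ≤ x then 1 else 0 := by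
  by_cases h : a ≤ x <;> simp [distFun, h]

/-- The standard law with atoms at `a` and `-1/a`; for `a < 0` it makes Cantelli's bound
at `a` an equality. -/
noncomputable def twoPoint (a : ℝ) : Measure ℝ :=
  mix (Measure.dirac (-a⁻¹)) (Measure.dirac a) (1 + a ^ 2)⁻¹

section twoPoint

variable {a : ℝ}

lemma inv_one_add_sq_mem_Icc (a : ℝ) : (1 + a ^ 2)⁻¹ ∈ Icc (0 : ℝ) 1 :=
  ⟨by positivity, inv_le_one_of_one_le₀ (by nlinarith)⟩

instance isProbabilityMeasure_twoPoint (a : ℝ) : IsProbabilityMeasure (twoPoint a) :=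
  isProbabilityMeasure_mix (inv_one_add_sq_mem_Icc a).1 (inv_one_add_sq_mem_Icc a).2

lemma integral_twoPoint (f : ℝ → ℝ) :
    ∫ x, f x ∂twoPoint a = (1 - (1 + a ^ 2)⁻¹) * f (-a⁻¹) + (1 + a ^ 2)⁻¹ * f a := by
  rw [twoPoint, integral_mix (inv_one_add_sq_mem_Icc a).1 (inv_one_add_sq_mem_Icc a).2
    (integrable_dirac enorm_lt_top) (integrable_dirac enorm_lt_top), integral_dirac,
    integral_dirac]

lemma integral_id_twoPoint (ha : a ≠ 0) : ∫ x, x ∂twoPoint a = 0 := by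
  rw [integral_twoPoint]
  field_simp
  ring

lemma integral_sq_twoPoint (ha : a ≠ 0) : ∫ x, x ^ 2 ∂twoPoint a = 1 := by
  rw [integral_twoPoint]
  field_simp
  ring

lemma distFun_twoPoint_of_lt (ha : a < 0) {x : ℝ} (hx : x < a) : distFun (twoPoint a) x = 0 := by
  have : x < -a⁻¹ := by have := inv_lt_zero.2 ha; linarith
  rw [twoPoint, distFun_mix (inv_one_add_sq_mem_Icc a).1 (inv_one_add_sq_mem_Icc a).2,
    distFun_dirac, distFun_dirac, if_neg this.not_ge, if_neg hx.not_ge]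
  ring

lemma distFun_twoPoint_self (ha : a < 0) : distFun (twoPoint a) a = (1 + a ^ 2)⁻¹ := by
  have : a < -a⁻¹ := by have := inv_lt_zero.2 ha; linarith
  rw [twoPoint, distFun_mix (inv_one_add_sq_mem_Icc a).1 (inv_one_add_sq_mem_Icc a).2,
    distFun_dirac, distFun_dirac, if_neg this.not_ge, if_pos le_rfl]
  ring

end twoPoint

def contaminationSet (μ₀ : Measure ℝ) (ε : ℝ) : Set (Measure ℝ) :=
  {μ | ∃ θ ∈ Icc (0 : ℝ) ε, ∃ ν : Measure ℝ,
    (IsProbabilityMeasure ν ∧ (∫ x, x ∂ν) = 0 ∧ (∫ x, x ^ 2 ∂ν) = 1) ∧ μ = mix μ₀ ν θ}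

/-- For `x < 0`, the largest value of `distFun μ x` over `μ ∈ contaminationSet μ₀ ε`. -/
noncomputable def upperDistFun (μ₀ : Measure ℝ) (ε x : ℝ) : ℝ :=
  (1 - ε) * distFun μ₀ x + ε / (1 + x ^ 2)

section contamination

variable {μ₀ μ : Measure ℝ} {ε : ℝ}

lemma mix_twoPoint_mem_contaminationSet (hε : 0 ≤ ε) {a : ℝ} (ha : a ≠ 0) :
    mix μ₀ (twoPoint a) ε ∈ contaminationSet μ₀ ε :=
  ⟨ε, ⟨hε, le_rfl⟩, twoPoint a,
    ⟨inferInstance, integral_id_twoPoint ha, integral_sq_twoPoint ha⟩, rfl⟩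

variable [IsProbabilityMeasure μ₀]

lemma self_mem_contaminationSet (hε : 0 ≤ ε) (h1 : ∫ x, x ∂μ₀ = 0) (h2 : ∫ x, x ^ 2 ∂μ₀ = 1) :
    μ₀ ∈ contaminationSet μ₀ ε :=
  ⟨0, ⟨le_rfl, hε⟩, μ₀, ⟨inferInstance, h1, h2⟩, by simp [mix]⟩

lemma isProbabilityMeasure_of_mem_contaminationSet (hε : ε ≤ 1)
    (hμ : μ ∈ contaminationSet μ₀ ε) : IsProbabilityMeasure μ := by
  obtain ⟨θ, hθ, ν, ⟨hν, -⟩, rfl⟩ := hμ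
  exact isProbabilityMeasure_mix hθ.1 (hθ.2.trans hε)

lemma mul_distFun_le_of_mem_contaminationSet (hε : ε ≤ 1) (hμ : μ ∈ contaminationSet μ₀ ε)
    (x : ℝ) : (1 - ε) * distFun μ₀ x ≤ distFun μ x := by
  obtain ⟨θ, hθ, ν, ⟨hν, -⟩, rfl⟩ := hμ
  rw [distFun_mix hθ.1 (hθ.2.trans hε)]
  nlinarith [hθ.1, hθ.2, distFun_nonneg μ₀ x, distFun_nonneg ν x]

lemma distFun_le_upperDistFun_of_mem_contaminationSet (h1 : ∫ x, x ∂μ₀ = 0)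
    (h2 : ∫ x, x ^ 2 ∂μ₀ = 1) (hε : ε ≤ 1) (hμ : μ ∈ contaminationSet μ₀ ε) {x : ℝ}
    (hx : x < 0) : distFun μ x ≤ upperDistFun μ₀ ε x := by
  obtain ⟨θ, hθ, ν, ⟨hν, hν1, hν2⟩, rfl⟩ := hμ
  have hμ₀x := distFun_le_inv_one_add_sq h1 h2 hx
  have hνx := distFun_le_inv_one_add_sq hν1 hν2 hx
  rw [distFun_mix hθ.1 (hθ.2.trans hε), upperDistFun, div_eq_mul_inv]
  nlinarith [mul_le_mul_of_nonneg_left hνx hθ.1,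
    mul_le_mul_of_nonneg_left hμ₀x (sub_nonneg.2 hθ.2)]

lemma distFun_mix_twoPoint_of_lt (hε0 : 0 ≤ ε) (hε1 : ε ≤ 1) {a x : ℝ} (ha : a < 0)
    (hx : x < a) : distFun (mix μ₀ (twoPoint a) ε) x = (1 - ε) * distFun μ₀ x := by
  rw [distFun_mix hε0 hε1, distFun_twoPoint_of_lt ha hx, mul_zero, add_zero]

lemma distFun_mix_twoPoint_self (hε0 : 0 ≤ ε) (hε1 : ε ≤ 1) {a : ℝ} (ha : a < 0) :
    distFun (mix μ₀ (twoPoint a) ε) a = upperDistFun μ₀ ε a := by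
  rw [distFun_mix hε0 hε1, distFun_twoPoint_self ha, upperDistFun, div_eq_mul_inv]

end contamination

section upperDistFun

variable {μ₀ : Measure ℝ} {ε : ℝ}

lemma continuous_upperDistFun (hcont : Continuous (distFun μ₀)) :
    Continuous (upperDistFun μ₀ ε) :=
  (continuous_const.mul hcont).add
    (continuous_const.div (by fun_prop) fun x => by positivity)

lemma strictMonoOn_upperDistFun (hmono : StrictMono (distFun μ₀)) (hε0 : 0 ≤ ε) (hε1 : ε < 1) :
    StrictMonoOn (upperDistFun μ₀ ε) (Iic 0) := by
  intro x hx y hy hxy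
  have hsq : 1 + y ^ 2 ≤ 1 + x ^ 2 := by nlinarith [mem_Iic.1 hy]
  have := div_le_div_of_nonneg_left hε0 (by positivity) hsq
  have := mul_lt_mul_of_pos_left (hmono hxy) (sub_pos.2 hε1)
  simp only [upperDistFun]
  linarith

variable [IsProbabilityMeasure μ₀]

lemma tendsto_upperDistFun_atBot : Tendsto (upperDistFun μ₀ ε) atBot (𝓝 0) := by
  unfold upperDistFun
  have hF := distFun_eq_cdf μ₀ ▸ tendsto_cdf_atBot μ₀
  have hsq : Tendsto (fun x : ℝ => 1 + x ^ 2) atBot atTop :=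
    tendsto_atTop_add_const_left _ _ <| by
      simpa [Function.comp_def] using
        (tendsto_pow_atTop (α := ℝ) two_ne_zero).comp tendsto_neg_atBot_atTop
  simpa using (hF.const_mul (1 - ε)).add (hsq.const_div_atTop ε)

lemma distFun_lt_upperDistFun (h1 : ∫ x, x ∂μ₀ = 0) (h2 : ∫ x, x ^ 2 ∂μ₀ = 1)
    (hmono : StrictMono (distFun μ₀)) (hε : 0 < ε) {x : ℝ} (hx : x < 0) :
    distFun μ₀ x < upperDistFun μ₀ ε x := by
  have hpos : 0 < distFun μ₀ (x - 1) :=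
    (distFun_nonneg μ₀ (x - 2)).trans_lt (hmono (by linarith))
  have := mul_lt_mul_of_pos_left (distFun_lt_inv_one_add_sq h1 h2 hx hpos) hε
  rw [upperDistFun, div_eq_mul_inv]
  linarith

end upperDistFun

section extremal

variable {μ₀ : Measure ℝ} [IsProbabilityMeasure μ₀] {ε α : ℝ}

/-- Approached, as `a ↑ 0`, by the mixtures with `twoPoint a`, which put no mass below `a`. -/
lemma sInf_VaR_contaminationSet (h1 : ∫ x, x ∂μ₀ = 0) (h2 : ∫ x, x ^ 2 ∂μ₀ = 1)
    (hmono : StrictMono (distFun μ₀)) (hα : α ∈ Ioo 0 1) (hε0 : 0 ≤ ε) (hε1 : ε < 1) {q : ℝ}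
    (hq : q ≤ 0) (hFq : (1 - ε) * distFun μ₀ q = α) :
    sInf ((fun μ : Measure ℝ => VaR μ α) '' contaminationSet μ₀ ε) = -q := by
  refine csInf_eq_of_forall_ge_of_forall_gt_exists_lt
    ⟨_, mem_image_of_mem _ (self_mem_contaminationSet hε0 h1 h2)⟩ ?_ fun w hw => ?_
  · rintro _ ⟨μ, hμ, rfl⟩
    have := isProbabilityMeasure_of_mem_contaminationSet hε1.le hμ
    have := lowerQuantile_le hα.1 (hFq ▸ mul_distFun_le_of_mem_contaminationSet hε1.le hμ q)
    dsimp only [VaR]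
    linarith
  · have ha : -w / 2 < 0 := by linarith
    have hμa := mix_twoPoint_mem_contaminationSet (μ₀ := μ₀) hε0 ha.ne
    have := isProbabilityMeasure_of_mem_contaminationSet hε1.le hμa
    refine ⟨_, mem_image_of_mem _ hμa, ?_⟩
    have hlow : min (-w / 2) q ≤ lowerQuantile (mix μ₀ (twoPoint (-w / 2)) ε) α := by
      refine le_lowerQuantile hα.2 fun z hz => ?_
      rw [distFun_mix_twoPoint_of_lt hε0 hε1.le ha (hz.trans_le (min_le_left _ _)), ← hFq]
      exact mul_lt_mul_of_pos_left (hmono (hz.trans_le (min_le_right _ _))) (sub_pos.2 hε1)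
    dsimp only [VaR]
    have := lt_min (by linarith : -w < -w / 2) (by linarith : -w < q)
    linarith

/-- Attained by the mixture with `twoPoint x`, whose distribution function meets
`upperDistFun μ₀ ε` at `x`. -/
lemma isGreatest_VaR_contaminationSet (h1 : ∫ x, x ∂μ₀ = 0) (h2 : ∫ x, x ^ 2 ∂μ₀ = 1)
    (hα : α < 1) (hε0 : 0 ≤ ε) (hε1 : ε ≤ 1) {x : ℝ} (hx : x < 0)
    (hFx : upperDistFun μ₀ ε x = α) (hlt : ∀ z < x, upperDistFun μ₀ ε z < α) :
    IsGreatest ((fun μ : Measure ℝ => VaR μ α) '' contaminationSet μ₀ ε) (-x) := by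
  have hbelow : ∀ μ ∈ contaminationSet μ₀ ε, ∀ z < x, distFun μ z < α := fun μ hμ z hz =>
    (distFun_le_upperDistFun_of_mem_contaminationSet h1 h2 hε1 hμ (hz.trans hx)).trans_lt
      (hlt z hz)
  have hμx := mix_twoPoint_mem_contaminationSet (μ₀ := μ₀) hε0 hx.ne
  refine ⟨⟨_, hμx, ?_⟩, ?_⟩
  · dsimp only [VaR]
    rw [lowerQuantile_eq (by rw [distFun_mix_twoPoint_self hε0 hε1 hx, hFx]) (hbelow _ hμx)]
  · rintro _ ⟨μ, hμ, rfl⟩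
    have := isProbabilityMeasure_of_mem_contaminationSet hε1 hμ
    have := le_lowerQuantile hα (hbelow μ hμ)
    dsimp only [VaR]
    linarith

end extremal

/-- Let `μ₀` be a standard probability measure (mean 0, variance 1) with
continuous, strictly increasing distribution function `F₀`, and let `𝓛_ε` be
the set of mixtures `(1−θ)μ₀ + θν`, `θ ∈ [0,ε]`, `ν` standard. If
`α ≤ (1−ε)F₀(0)`, then `inf_{μ ∈ 𝓛_ε} VaR_α(μ) = VaR_{α/(1−ε)}(μ₀)` and
`sup_{μ ∈ 𝓛_ε} VaR_α(μ)` is the unique `r > −F₀⁻¹(α)` solving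
`(1−ε)F₀(−r) + ε/(1+r²) = α`. -/
theorem extremal_VaR_mixtures (μ₀ : Measure ℝ) [IsProbabilityMeasure μ₀]
    (hmean : (∫ x, x ∂μ₀) = 0) (hvar : (∫ x, x ^ 2 ∂μ₀) = 1)
    (hcont : Continuous (distFun μ₀)) (hmono : StrictMono (distFun μ₀))
    (α : ℝ) (hα : α ∈ Ioo (0 : ℝ) 1) (ε : ℝ) (hε : ε ∈ Ioo (0 : ℝ) 1)
    (Lε : Set (Measure ℝ))
    (hLε : Lε = {μ | ∃ θ ∈ Icc (0 : ℝ) ε, ∃ ν : Measure ℝ,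
      (IsProbabilityMeasure ν ∧ (∫ x, x ∂ν) = 0 ∧ (∫ x, x ^ 2 ∂ν) = 1) ∧
      μ = ENNReal.ofReal (1 - θ) • μ₀ + ENNReal.ofReal θ • ν})
    (hcond : α ≤ (1 - ε) * distFun μ₀ 0) :
    sInf ((fun μ : Measure ℝ => VaR μ α) '' Lε) = VaR μ₀ (α / (1 - ε)) ∧
    (- lowerQuantile μ₀ α < sSup ((fun μ : Measure ℝ => VaR μ α) '' Lε) ∧
      (1 - ε) * distFun μ₀ (- sSup ((fun μ : Measure ℝ => VaR μ α) '' Lε)) +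
        ε / (1 + (sSup ((fun μ : Measure ℝ => VaR μ α) '' Lε)) ^ 2) = α ∧
      ∀ r : ℝ, - lowerQuantile μ₀ α < r →
        (1 - ε) * distFun μ₀ (-r) + ε / (1 + r ^ 2) = α →
        r = sSup ((fun μ : Measure ℝ => VaR μ α) '' Lε)) := by
  obtain ⟨hα0, hα1⟩ := hα
  obtain ⟨hε0, hε1⟩ := hε
  obtain rfl : Lε = contaminationSet μ₀ ε := hLε
  have hF0 : α < distFun μ₀ 0 := by
    nlinarith [(distFun_nonneg μ₀ (-1)).trans_lt (hmono neg_one_lt_zero)]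
  have hFlim := distFun_eq_cdf μ₀ ▸ tendsto_cdf_atBot μ₀
  obtain ⟨q, -, hFq⟩ := exists_le_eq_of_tendsto_atBot hcont hFlim hα0 hF0.le
  have hq : q < 0 := hmono.lt_iff_lt.1 (hFq ▸ hF0)
  obtain ⟨q', hq', hFq'⟩ := exists_le_eq_of_tendsto_atBot hcont hFlim
    (div_pos hα0 (sub_pos.2 hε1)) ((div_le_iff₀' (sub_pos.2 hε1)).2 hcond)
  have hUq := distFun_lt_upperDistFun hmean hvar hmono hε0 hq
  obtain ⟨x, hxq, hUx⟩ := exists_le_eq_of_tendsto_atBot (continuous_upperDistFun hcont)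
    tendsto_upperDistFun_atBot hα0 (hFq ▸ hUq.le)
  have hxq : x < q := hxq.lt_of_ne (by rintro rfl; exact hUq.ne (hFq.trans hUx.symm))
  have hx : x < 0 := hxq.trans hq
  have hU := strictMonoOn_upperDistFun hmono hε0.le hε1
  have hUlt : ∀ z < x, upperDistFun μ₀ ε z < α := fun z hz => hUx ▸ hU (hz.trans hx).le hx.le hz
  rw [(isGreatest_VaR_contaminationSet hmean hvar hα1 hε0.le hε1.le hx hUx hUlt).csSup_eq,
    sInf_VaR_contaminationSet hmean hvar hmono ⟨hα0, hα1⟩ hε0.le hε1 hq'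
      (by rw [hFq']; field_simp),
    VaR, lowerQuantile_eq_of_strictMono hmono hFq', lowerQuantile_eq_of_strictMono hmono hFq]
  refine ⟨rfl, neg_lt_neg hxq, by simpa [upperDistFun] using hUx, fun r hr hUr => ?_⟩
  have : -r = x := hU.injOn (mem_Iic.2 (by linarith)) hx.le
    (by rw [hUx]; simpa [upperDistFun] using hUr)
  linarith
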